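/- arXiv:1510.08711 — 3 statements merged into one kernel-verified Lean document; each statement's English description precedes it below -/
import Mathlib

section
/- Let D be a non-commutative division ring that is weakly locally finite and algebraic over its center. Then the multiplicative group D* is not finitely generated. -/
/-- A division ring is *centrally finite* if it is a finite-dimensional
vector space over its own center. -/
def IsCentrallyFinite (E : Type*) [DivisionRing E] : Prop :=
  Module.Finite (Subring.center E) E

/-- A division ring is *weakly locally finite* if for every finite subset `S`,
the division subring generated by `S` is centrally finite. -/
def IsWeaklyLocallyFinite (D : Type*) [DivisionRing D] : Prop :=
  ∀ S : Finset D, IsCentrallyFinite (Subfield.closure (S : Set D))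

/-- A division ring is *algebraic over its center* if every element is a root of a
nonzero polynomial all of whose coefficients lie in the center. -/
def IsAlgebraicOverCenter (D : Type*) [DivisionRing D] : Prop :=
  ∀ x : D, ∃ p : Polynomial D, p ≠ 0 ∧ (∀ i, p.coeff i ∈ Subring.center D) ∧ p.eval x = 0

/-!
If finitely many units generate `Dˣ`, then they and their inverses generate `D` as a ring and
as a division ring, so weak local finiteness makes `D` finite-dimensional over its centre `Z`.
By the Artin–Tate lemma `Z` is then a finitely generated `ℤ`-algebra, hence a finite field by
Zariski's lemma over the Jacobson ring `ℤ`. So `D` is finite, and commutative by Wedderburn.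
-/

lemma isJacobsonRing_of_jacobson_bot_eq_bot {R : Type*} [CommRing R] [NoZeroDivisors R]
    [Ring.KrullDimLE 1 R] (h : (⊥ : Ideal R).jacobson = ⊥) : IsJacobsonRing R := by
  rw [isJacobsonRing_iff_prime_eq]
  intro P hP
  rcases eq_or_ne P ⊥ with rfl | hne
  · exact h
  · have := hP.isMaximal_of_ne_bot hne
    exact Ideal.jacobson_eq_self_of_isMaximal

lemma Int.jacobson_bot : (⊥ : Ideal ℤ).jacobson = ⊥ := by
  refine eq_bot_iff.mpr fun x hx => ?_
  rw [Ideal.mem_jacobson_bot] at hx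
  have h₁ := Int.isUnit_iff.mp (hx 1)
  have h₂ := Int.isUnit_iff.mp (hx (-1))
  rw [Ideal.mem_bot]
  omega

instance Int.instIsJacobsonRing : IsJacobsonRing ℤ :=
  isJacobsonRing_of_jacobson_bot_eq_bot Int.jacobson_bot

theorem finite_of_finiteType_int (K : Type*) [Field K] [Algebra.FiniteType ℤ K] : Finite K := by
  have : Module.Finite ℤ K := finite_of_finite_type_of_isJacobsonRing ℤ K
  obtain hp | hp := CharP.char_is_prime_or_zero K (ringChar K)
  · have : Fact (ringChar K).Prime := ⟨hp⟩
    let := ZMod.algebra K (ringChar K)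
    have : Module.Finite (ZMod (ringChar K)) K :=
      Module.Finite.of_restrictScalars_finite ℤ _ K
    exact Module.finite_of_finite (ZMod (ringChar K))
  · have : CharZero K := (CharP.charP_zero_iff_charZero K).mp (hp ▸ ringChar.charP K)
    exact (Int.not_isField (isField_of_isIntegral_of_isField
      (FaithfulSMul.algebraMap_injective ℤ K) (Field.toIsField K))).elim

/-- The Artin–Tate lemma `fg_of_fg_of_fg`, with `C` allowed to be noncommutative. -/
theorem Algebra.fg_top_of_fg_top_of_fg_top_of_injective (A B C : Type*) [CommRing A] [CommRing B]
    [Ring C] [Algebra A B] [Algebra B C] [Algebra A C] [IsScalarTower A B C]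
    [IsNoetherianRing A] (hAC : (⊤ : Subalgebra A C).FG) (hBC : (⊤ : Submodule B C).FG)
    (hBCi : Function.Injective (algebraMap B C)) : (⊤ : Subalgebra A B).FG := by
  obtain ⟨B₀, hAB₀, hB₀C⟩ := exists_subalgebra_of_fg A B C hAC hBC
  have : IsNoetherianRing B₀ := isNoetherianRing_of_fg hAB₀
  have : Module.Finite B₀ C := ⟨hB₀C⟩
  have hB₀B : (⊤ : Submodule B₀ B).FG :=
    fg_of_injective (IsScalarTower.toAlgHom B₀ B C).toLinearMap hBCi
  exact Algebra.fg_trans' (B₀.fg_top.2 hAB₀) (Subalgebra.fg_of_submodule_fg hB₀B)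

theorem IsCentrallyFinite.finite_of_finiteType {D : Type*} [DivisionRing D]
    [Algebra.FiniteType ℤ D] (h : IsCentrallyFinite D) : Finite D := by
  have : Algebra.FiniteType ℤ (Subring.center D) :=
    ⟨Algebra.fg_top_of_fg_top_of_fg_top_of_injective ℤ _ D Algebra.FiniteType.out h.fg_top
      Subtype.val_injective⟩
  have := finite_of_finiteType_int (Subring.center D)
  have : Module.Finite (Subring.center D) D := h
  exact Module.finite_of_finite (Subring.center D)

theorem IsCentrallyFinite.of_ringEquiv {E F : Type*} [DivisionRing E] [DivisionRing F]
    (e : E ≃+* F) (h : IsCentrallyFinite E) : IsCentrallyFinite F :=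
  have : Module.Finite (Subring.center E) E := h
  let f : E →ₛₗ[(Subring.centerCongr e).toRingHom] F :=
    { toFun := e
      map_add' := map_add e
      map_smul' := fun c x => map_mul e (c : E) x }
  Module.Finite.of_surjective f e.surjective

theorem exists_finset_subring_closure_eq_top_of_fg_units (D : Type*) [DivisionRing D]
    [Group.FG Dˣ] : ∃ T : Finset D, Subring.closure (T : Set D) = ⊤ := by
  classical
  obtain ⟨S, hS⟩ := Group.FG.out (G := Dˣ)
  let T : Finset D := S.image Units.val ∪ S.image (fun u => u⁻¹.val)
  suffices h : ∀ u ∈ Subgroup.closure (S : Set Dˣ), u.val ∈ Subring.closure (T : Set D) by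
    refine ⟨T, eq_top_iff.mpr fun x _ => ?_⟩
    rcases eq_or_ne x 0 with rfl | hx
    · exact zero_mem _
    · exact h (Units.mk0 x hx) (hS ▸ Subgroup.mem_top _)
  intro u hu
  induction hu using Subgroup.closure_induction'' with
  | mem u hu =>
    exact Subring.subset_closure (Finset.mem_union_left _ (Finset.mem_image_of_mem _ hu))
  | inv_mem u hu =>
    exact Subring.subset_closure (Finset.mem_union_right _ (Finset.mem_image_of_mem _ hu))
  | one => exact one_mem _
  | mul u v _ _ hu hv => exact mul_mem hu hv

theorem Algebra.FiniteType.int_of_subring_closure_eq_top {R : Type*} [Ring R] {T : Finset R}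
    (hT : Subring.closure (T : Set R) = ⊤) : Algebra.FiniteType ℤ R :=
  ⟨⟨T, by
    rw [Algebra.adjoin_int, hT]
    exact Algebra.eq_top_iff.mpr fun x => mem_subalgebraOfSubring.mpr (Subring.mem_top x)⟩⟩

theorem Subfield.closure_eq_top_of_subring_closure_eq_top {K : Type*} [DivisionRing K] {s : Set K}
    (hs : Subring.closure s = ⊤) : Subfield.closure s = ⊤ :=
  eq_top_iff.mpr fun x _ => Subfield.subring_closure_le s (hs ▸ Subring.mem_top x)

theorem units_not_fg_general (D : Type*) [DivisionRing D]
    (hnc : ∃ a b : D, a * b ≠ b * a) (hwlf : IsWeaklyLocallyFinite D) : ¬ Group.FG Dˣ := by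
  intro _
  obtain ⟨T, hT⟩ := exists_finset_subring_closure_eq_top_of_fg_units D
  have : Algebra.FiniteType ℤ D := .int_of_subring_closure_eq_top hT
  have hcf : IsCentrallyFinite D := by
    have hE := hwlf T
    rw [Subfield.closure_eq_top_of_subring_closure_eq_top hT] at hE
    exact hE.of_ringEquiv Subfield.topEquiv
  have : Finite D := hcf.finite_of_finiteType
  obtain ⟨a, b, hab⟩ := hnc
  exact hab ((littleWedderburn D).mul_comm a b)

/-- The multiplicative group of a non-commutative, weakly locally finite division ring
that is algebraic over its center is not finitely generated. -/
theorem units_not_fg (D : Type*) [DivisionRing D]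
    (hnc : ∃ a b : D, a * b ≠ b * a) (hwlf : IsWeaklyLocallyFinite D)
    (halg : IsAlgebraicOverCenter D) : ¬ Group.FG Dˣ :=
  units_not_fg_general D hnc hwlf
end

section
/- Let D be a weakly locally finite division ring and let D' denote the derived (commutator) subgroup of the multiplicative group D*. Then the center Z(D') of the group D' is a torsion group, i.e., every element of Z(D') has finite order. -/
/-!
A product of commutators in `D*` involves finitely many elements, so it is a commutator product
`w` in the units of a centrally finite division subring `K`. The centralizer of `K'` in `K` is a
division subring normalized by `K*`, so by Cartan–Brauer–Hua it is `K` or lies in `Z(K)`; either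
way `w ∈ Z(K)`. Finally the norm `K* → Z(K)*` of `K` as a `Z(K)`-algebra kills commutators and
is `z ↦ z ^ n` on `Z(K)`, with `n = [K : Z(K)]`, so `w ^ n = 1`.
-/

section

variable {E : Type*} [DivisionRing E]

-- `c` and `1 + c` conjugate `a` to elements `k₁`, `k₂` of `K` with `(k₂ - k₁) * c = a - k₂`,
-- so `c ∉ K` forces `k₂ = k₁ = a`.
theorem Subfield.commute_of_conj_mem {K : Subfield E}
    (hK : ∀ u : E, u ≠ 0 → ∀ a ∈ K, u * a * u⁻¹ ∈ K) {a c : E} (ha : a ∈ K) (hc : c ∉ K) :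
    Commute a c := by
  have hc₀ : c ≠ 0 := fun h => hc (h ▸ K.zero_mem)
  have hc₁ : 1 + c ≠ 0 := fun h => hc (by
    rw [eq_neg_of_add_eq_zero_right h]; exact K.neg_mem K.one_mem)
  set k₁ := c * a * c⁻¹
  set k₂ := (1 + c) * a * (1 + c)⁻¹
  have hk₁ : k₁ * c = c * a := by simp only [k₁, mul_assoc, inv_mul_cancel₀ hc₀, mul_one]
  have hk₂ : k₂ * (1 + c) = (1 + c) * a := by
    simp only [k₂, mul_assoc, inv_mul_cancel₀ hc₁, mul_one]
  have key : (k₂ - k₁) * c = a - k₂ :=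
    calc (k₂ - k₁) * c = k₂ * (1 + c) - k₂ - k₁ * c := by noncomm_ring
      _ = (1 + c) * a - k₂ - c * a := by rw [hk₂, hk₁]
      _ = a - k₂ := by noncomm_ring
  have hk : k₂ = k₁ := by
    by_contra hne
    refine hc ?_
    rw [← inv_mul_cancel_left₀ (sub_ne_zero.mpr hne) c, key]
    have hk₁K := hK c hc₀ a ha
    have hk₂K := hK (1 + c) hc₁ a ha
    exact K.mul_mem (K.inv_mem (K.sub_mem hk₂K hk₁K)) (K.sub_mem ha hk₂K)
  have hak : a = k₁ := by rwa [hk, sub_self, zero_mul, eq_comm, sub_eq_zero] at key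
  rw [Commute, SemiconjBy, ← hk₁, ← hak]

-- The Cartan–Brauer–Hua theorem.
theorem Subfield.le_center_of_conj_mem {K : Subfield E}
    (hK : ∀ u : E, u ≠ 0 → ∀ a ∈ K, u * a * u⁻¹ ∈ K) (hne : K ≠ ⊤) :
    K.toSubring ≤ Subring.center E := by
  obtain ⟨b, hb⟩ : ∃ b, b ∉ K := by simpa [SetLike.ext_iff] using hne
  intro a ha
  rw [Subring.mem_center_iff]
  intro d
  by_cases hd : d ∈ K
  · have hbd : b + d ∉ K := fun h => hb (by simpa using K.sub_mem h hd)
    have h := (Subfield.commute_of_conj_mem hK ha hbd).sub_right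
      (Subfield.commute_of_conj_mem hK ha hb)
    rw [add_sub_cancel_left] at h
    exact h.symm.eq
  · exact (Subfield.commute_of_conj_mem hK ha hd).symm.eq

def Subfield.centralizer (s : Set E) : Subfield E :=
  { Subring.centralizer s with inv_mem' := fun _ => Set.inv_mem_centralizer₀ }

theorem Subfield.conj_mem_centralizer {s : Set E} (hs : ∀ u : E, u ≠ 0 → ∀ t ∈ s, u⁻¹ * t * u ∈ s)
    {u : E} (hu : u ≠ 0) {a : E} (ha : a ∈ Subfield.centralizer s) :
    u * a * u⁻¹ ∈ Subfield.centralizer s := by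
  intro t ht
  have h := ha _ (hs u hu t ht)
  calc t * (u * a * u⁻¹) = u * ((u⁻¹ * t * u) * a) * u⁻¹ := by
        simp only [mul_assoc, mul_inv_cancel_left₀ hu]
    _ = u * (a * (u⁻¹ * t * u)) * u⁻¹ := by rw [h]
    _ = u * a * u⁻¹ * t := by simp only [mul_assoc, mul_inv_cancel₀ hu, mul_one]

theorem val_mem_center_of_mem_commutator {w : Eˣ} (hw : w ∈ commutator Eˣ)
    (hcomm : ∀ y ∈ commutator Eˣ, w * y = y * w) : (w : E) ∈ Subring.center E := by
  set C := Subfield.centralizer (((↑) : Eˣ → E) '' commutator Eˣ)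
  have hwC : (w : E) ∈ C := by
    rintro _ ⟨y, hy, rfl⟩
    exact congrArg Units.val (hcomm y hy).symm
  have hC : ∀ u : E, u ≠ 0 → ∀ a ∈ C, u * a * u⁻¹ ∈ C := by
    refine fun u hu a ha => Subfield.conj_mem_centralizer ?_ hu ha
    rintro u hu _ ⟨y, hy, rfl⟩
    refine ⟨(Units.mk0 u hu)⁻¹ * y * (Units.mk0 u hu)⁻¹⁻¹, ?_, by simp⟩
    exact (commutator Eˣ).normal_of_characteristic.conj_mem y hy _
  by_cases htop : C = ⊤
  · rw [Subring.mem_center_iff]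
    intro g
    exact ((htop ▸ Subfield.mem_top g : g ∈ C) _ ⟨w, hw, rfl⟩).symm
  · exact Subfield.le_center_of_conj_mem hC htop hwC

theorem MonoidHom.map_val_eq_one_of_mem_commutator {M N : Type*} [Monoid M] [CommMonoid N]
    (f : M →* N) {w : Mˣ} (hw : w ∈ commutator Mˣ) : f w = 1 :=
  congrArg Units.val (Abelianization.commutator_subset_ker (Units.map f) hw)

theorem pow_finrank_center_eq_one_of_mem_commutator {w : Eˣ} (hw : w ∈ commutator Eˣ)
    (hcomm : ∀ y ∈ commutator Eˣ, w * y = y * w) :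
    w ^ Module.finrank (Subring.center E) E = 1 := by
  set z : Subring.center E := ⟨w, val_mem_center_of_mem_commutator hw hcomm⟩
  have hz : z ^ Module.finrank (Subring.center E) E = 1 := by
    rw [← Algebra.norm_algebraMap (S := E)]
    exact (Algebra.norm (Subring.center E) : E →* Subring.center E)
      |>.map_val_eq_one_of_mem_commutator hw
  ext
  exact congrArg Subtype.val hz

def Subfield.unitsSubgroup (K : Subfield E) : Subgroup Eˣ :=
  (Units.map K.subtype.toMonoidHom).range

theorem Subfield.mem_unitsSubgroup {K : Subfield E} {u : Eˣ} :
    u ∈ K.unitsSubgroup ↔ (u : E) ∈ K := by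
  refine ⟨fun ⟨v, hv⟩ => hv ▸ (v : K).2, fun hu => ⟨Units.mk0 ⟨u, hu⟩ ?_, Units.ext rfl⟩⟩
  exact fun h => u.ne_zero (congrArg Subtype.val h)

theorem Subfield.unitsSubgroup_mono : Monotone (Subfield.unitsSubgroup (E := E)) :=
  fun _ _ hKL _ hu => Subfield.mem_unitsSubgroup.mpr (hKL (Subfield.mem_unitsSubgroup.mp hu))

theorem exists_finset_mem_commutator_unitsSubgroup_closure {x : Eˣ} (hx : x ∈ commutator Eˣ) :
    ∃ S : Finset E, x ∈ ⁅(Subfield.closure (S : Set E)).unitsSubgroup,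
      (Subfield.closure (S : Set E)).unitsSubgroup⁆ := by
  classical
  have mono {S T : Finset E} (hST : S ⊆ T) :=
    have h := Subfield.unitsSubgroup_mono (Subfield.closure_mono (Finset.coe_subset.mpr hST))
    Subgroup.commutator_mono h h
  rw [commutator_eq_closure] at hx
  induction hx using Subgroup.closure_induction with
  | mem y hy =>
    obtain ⟨a, b, rfl⟩ := hy
    refine ⟨{(a : E), (b : E)}, Subgroup.commutator_mem_commutator ?_ ?_⟩ <;>
      exact Subfield.mem_unitsSubgroup.mpr (Subfield.subset_closure (by simp))
  | one => exact ⟨∅, one_mem _⟩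
  | mul y z _ _ hy hz =>
    obtain ⟨S, hS⟩ := hy
    obtain ⟨T, hT⟩ := hz
    exact ⟨S ∪ T, mul_mem (mono Finset.subset_union_left hS) (mono Finset.subset_union_right hT)⟩
  | inv y _ hy =>
    obtain ⟨S, hS⟩ := hy
    exact ⟨S, inv_mem hS⟩

end

/-- In a weakly locally finite division ring, the center of the derived subgroup `D'`
of `D*` is a torsion group: every element of `Z(D')` has finite order. -/
theorem center_commutator_torsion (D : Type*) [DivisionRing D]
    (h : IsWeaklyLocallyFinite D) :
    ∀ x ∈ commutator Dˣ, (∀ y ∈ commutator Dˣ, x * y = y * x) →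
      ∃ m : ℕ, 0 < m ∧ x ^ m = 1 := by
  intro x hx hcomm
  obtain ⟨S, hS⟩ := exists_finset_mem_commutator_unitsSubgroup_closure hx
  set K := Subfield.closure (S : Set D)
  have : Module.Finite (Subring.center K) K := h S
  set ι := Units.map K.subtype.toMonoidHom
  have hι : Function.Injective ι := Units.map_injective K.subtype_injective
  have hιD : (commutator Kˣ).map ι ≤ commutator Dˣ :=
    (map_commutator_eq _ ι).trans_le (Subgroup.commutator_mono le_top le_top)
  rw [Subfield.unitsSubgroup, ← map_commutator_eq] at hS
  obtain ⟨w, hw, rfl⟩ := hS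
  have hwcomm : ∀ y ∈ commutator Kˣ, w * y = y * w := fun y hy => hι <| by
    simpa only [map_mul] using hcomm (ι y) (hιD ⟨y, hy, rfl⟩)
  refine ⟨Module.finrank (Subring.center K) K, Module.finrank_pos, ?_⟩
  rw [← map_pow, pow_finrank_center_eq_one_of_mem_commutator hw hwcomm, map_one]
end

section
/- Let D be a weakly locally finite division ring with center F. If for all a, b ∈ D* there exists a positive integer n (depending on a and b) such that (aba⁻¹b⁻¹)ⁿ ∈ F, then D is commutative. -/
open Polynomial
open scoped commutatorElement IsMulCommutative Pointwise

section Group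

variable {G : Type*} [Group G] {c x : G} {j : ℕ}

theorem pow_mul_pow_eq_of_inv_mul_mul_eq_pow (h : x⁻¹ * c * x = c ^ j) (a b : ℕ) :
    c ^ a * x ^ b = x ^ b * c ^ (a * j ^ b) := by
  induction b generalizing a with
  | zero => simp
  | succ b ih =>
    have hconj : c ^ a * x = x * c ^ (a * j) := by
      have := conj_pow (a := x⁻¹) (b := c) (i := a)
      rw [inv_inv, h, ← pow_mul] at this
      rw [mul_comm a, this]; group
    rw [pow_succ', ← mul_assoc, hconj, mul_assoc, ih, ← mul_assoc, pow_succ' j, ← mul_assoc a]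

theorem finite_closure_pair_of_inv_mul_mul_eq_pow (hc : IsOfFinOrder c) (hx : IsOfFinOrder x)
    (h : x⁻¹ * c * x = c ^ j) : (Submonoid.closure {c, x} : Set G).Finite := by
  let S : Submonoid G :=
    { carrier := (Submonoid.powers x : Set G) * Submonoid.powers c
      one_mem' := ⟨1, one_mem _, 1, one_mem _, one_mul 1⟩
      mul_mem' := by
        rintro _ _ ⟨_, ⟨b, rfl⟩, _, ⟨a, rfl⟩, rfl⟩ ⟨_, ⟨b', rfl⟩, _, ⟨a', rfl⟩, rfl⟩
        refine ⟨x ^ (b + b'), ⟨_, rfl⟩, c ^ (a * j ^ b' + a'), ⟨_, rfl⟩, ?_⟩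
        simp only [pow_add, mul_assoc]
        rw [← mul_assoc (c ^ a), pow_mul_pow_eq_of_inv_mul_mul_eq_pow h, mul_assoc] }
  have hS : Submonoid.closure {c, x} ≤ S := by
    rw [Submonoid.closure_le, Set.insert_subset_iff, Set.singleton_subset_iff]
    exact ⟨⟨1, one_mem _, c, Submonoid.mem_powers c, one_mul c⟩,
      ⟨x, Submonoid.mem_powers x, 1, one_mem _, mul_one x⟩⟩
  exact (hx.finite_powers.mul hc.finite_powers).subset hS

end Group

theorem IsOfFinOrder.isIntegral {R A : Type*} [CommRing R] [Ring A] [Algebra R A] {x : A}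
    (hx : IsOfFinOrder x) : IsIntegral R x := by
  obtain ⟨n, hn, hxn⟩ := hx.exists_pow_eq_one
  exact .of_pow hn (hxn ▸ isIntegral_one)

theorem Subring.mem_center_of_map_mem_center {R S : Type*} [Ring R] [Ring S] {f : R →+* S}
    (hf : Function.Injective f) {y : R} (h : f y ∈ Subring.center S) : y ∈ Subring.center R :=
  Subring.mem_center_iff.mpr fun g => hf (by simpa using Subring.mem_center_iff.mp h (f g))

section Eigenvalues

variable {R M : Type*} [CommRing R] [AddCommGroup M] [Module R M]

theorem Module.End.exists_hasEigenvalue_ne_of_aeval_prod_eq_zero {f : Module.End R M}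
    {s : Finset R} {r₀ : R} (hr₀ : r₀ ∈ s) (hs : aeval f (∏ r ∈ s, (X - C r)) = 0)
    (hf : f ≠ algebraMap R _ r₀) : ∃ r ∈ s, r ≠ r₀ ∧ f.HasEigenvalue r := by
  classical
  by_contra! hnone
  have hinj : Function.Injective (aeval f (∏ r ∈ s.erase r₀, (X - C r))) := by
    refine Finset.prod_induction _ (fun q => Function.Injective (aeval f q)) ?_ ?_ ?_
    · intro p q hp hq
      rw [map_mul, Module.End.mul_eq_comp, LinearMap.coe_comp]
      exact hp.comp hq
    · simpa [Module.End.one_eq_id] using Function.injective_id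
    · intro r hr
      have := hnone r (Finset.mem_of_mem_erase hr) (Finset.ne_of_mem_erase hr)
      rw [Module.End.hasEigenvalue_iff, not_not, Module.End.eigenspace_def,
        LinearMap.ker_eq_bot] at this
      simpa [Algebra.algebraMap_eq_smul_one] using this
  apply hf
  -- the factors commute, so `X - r₀` can be applied first
  rw [← Finset.prod_erase_mul _ _ hr₀, map_mul, Module.End.mul_eq_comp] at hs
  ext v
  have hv := hinj ((LinearMap.congr_fun hs v).trans (map_zero _).symm)
  simpa [sub_eq_zero, Algebra.algebraMap_eq_smul_one] using hv

theorem Module.End.exists_hasEigenvalue_pow_of_pow_eq_one [IsDomain R] {f : Module.End R M}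
    {γ : R} {n : ℕ} (hγ : IsPrimitiveRoot γ n) (hn : 0 < n) (hfn : f ^ n = 1) (hf : f ≠ 1) :
    ∃ i, 0 < i ∧ i < n ∧ f.HasEigenvalue (γ ^ i) := by
  have hroots : aeval f (∏ ζ ∈ nthRootsFinset n (1 : R), (X - C ζ)) = 0 := by
    simp [← X_pow_sub_one_eq_prod hn hγ, hfn]
  obtain ⟨ζ, hζ, hζ1, hfζ⟩ := exists_hasEigenvalue_ne_of_aeval_prod_eq_zero
    (one_mem_nthRootsFinset hn) hroots (by simpa using hf)
  have : NeZero n := ⟨hn.ne'⟩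
  obtain ⟨i, hin, rfl⟩ := hγ.eq_pow_of_pow_eq_one ((mem_nthRootsFinset hn 1).mp hζ)
  exact ⟨i, Nat.pos_of_ne_zero (by rintro rfl; exact hζ1 (pow_zero γ)), hin, hfζ⟩

end Eigenvalues

theorem isIntegral_of_add_pow_eq_add_pow {F A : Type*} [Field F] [CommRing A] [IsDomain A]
    [Algebra F A] {a b t : A} (ha : IsIntegral F a) (hb : IsIntegral F b) (hab : a ≠ b) {M : ℕ}
    (hM : 0 < M) (h : (b + t) ^ M = (a + t) ^ M) : IsIntegral F t := by
  let a' : integralClosure F A := ⟨a, ha⟩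
  let b' : integralClosure F A := ⟨b, hb⟩
  have halg : IsAlgebraic (integralClosure F A) t := by
    refine ⟨(X + C b') ^ M - (X + C a') ^ M, fun h0 => hab ?_, ?_⟩
    · have := congrArg (eval (-a')) h0
      simp [hM.ne'] at this
      exact congrArg Subtype.val (neg_add_eq_zero.mp this)
    · simp [add_comm t, a', b', h]
  exact (halg.restrictScalars_of_isIntegral F).isIntegral

namespace NumberField

variable {K : Type*} [Field K] [NumberField K]

theorem finite_setOf_isOfFinOrder : {x : K | IsOfFinOrder x}.Finite :=
  (Embeddings.finite_of_norm_le K ℂ 1).subset fun _ hx =>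
    ⟨hx.isIntegral, fun φ => (φ.toMonoidHom.isOfFinOrder hx).norm_eq_one.le⟩

theorem eq_of_forall_exists_add_natCast_pow_eq {a b : K}
    (h : ∀ t : ℕ, ∃ M, 0 < M ∧ (b + t) ^ M = (a + t) ^ M) : a = b := by
  by_contra hab
  have hne : ∀ t : ℕ, a + t ≠ 0 := fun t hat => by
    obtain ⟨M, hM, hMt⟩ := h t
    rw [hat, zero_pow hM.ne', pow_eq_zero_iff hM.ne'] at hMt
    exact hab (add_right_cancel (hat.trans hMt.symm))
  let ζ : ℕ → K := fun t => (b + t) / (a + t)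
  have hζ : Function.Injective ζ := fun t s hts => by
    rw [div_eq_div_iff (hne t) (hne s)] at hts
    have : ((t : K) - s) * (a - b) = 0 := by linear_combination hts
    exact_mod_cast sub_eq_zero.mp ((mul_eq_zero.mp this).resolve_right (sub_ne_zero.mpr hab))
  refine Set.infinite_range_of_injective hζ (finite_setOf_isOfFinOrder.subset ?_)
  rintro _ ⟨t, rfl⟩
  obtain ⟨M, hM, hMt⟩ := h t
  exact isOfFinOrder_iff_pow_eq_one.mpr
    ⟨M, hM, by rw [div_pow, hMt, div_self (pow_ne_zero _ (hne t))]⟩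

end NumberField

section DivisionRing

variable {E : Type*} [DivisionRing E]

theorem mem_center_of_forall_commutator_mem_center {a : Eˣ}
    (h : ∀ y : Eˣ, ((⁅a, y⁆ : Eˣ) : E) ∈ Subring.center E) : (a : E) ∈ Subring.center E := by
  have hconj : ∀ y : E, y ≠ 0 → ∃ z ∈ Subring.center E, a * y * (a : E)⁻¹ = z * y := fun y hy =>
    ⟨_, h (Units.mk0 y hy), by simp [commutatorElement_def, mul_assoc, hy]⟩
  refine Subring.mem_center_iff.mpr fun y => ?_
  suffices a * y * (a : E)⁻¹ = y from ((mul_inv_eq_iff_eq_mul₀ a.ne_zero).mp this).symm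
  rcases eq_or_ne y 0 with rfl | hy0
  · simp
  rcases eq_or_ne (y + 1) 0 with hy1 | hy1
  · simp [eq_neg_of_add_eq_zero_left hy1]
  -- if the central commutators of `a` with `y` and `y + 1` differ, `y` is a quotient of central
  -- elements
  obtain ⟨z, hz, hzy⟩ := hconj y hy0
  obtain ⟨z', hz', hzy'⟩ := hconj (y + 1) hy1
  have hsum : z * y + 1 = z' * y + z' := by
    rw [← hzy, ← mul_add_one z', ← hzy', mul_add_one, add_mul, mul_inv_cancel₀ a.ne_zero]
  rcases eq_or_ne z z' with rfl | hzz
  · rw [hzy, (add_left_cancel hsum : 1 = z).symm, one_mul]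
  · have hy : y = (z - z')⁻¹ * (z' - 1) := by
      rw [eq_inv_mul_iff_mul_eq₀ (sub_ne_zero.mpr hzz), sub_mul, sub_eq_sub_iff_add_eq_add, hsum,
        add_comm]
    have hyc : y ∈ Subring.center E :=
      hy ▸ mul_mem (Set.inv_mem_center (sub_mem hz hz')) (sub_mem hz' (one_mem _))
    rw [Subring.mem_center_iff.mp hyc a, mul_inv_cancel_right₀ a.ne_zero]

theorem isOfFinOrder_commutator_of_pow_mem_center [Module.Finite (Subring.center E) E]
    (a b : Eˣ) {m : ℕ} (hm : 0 < m) (h : ((⁅a, b⁆ : Eˣ) : E) ^ m ∈ Subring.center E) :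
    IsOfFinOrder ⁅a, b⁆ := by
  have hN : Algebra.norm (Subring.center E) ((⁅a, b⁆ : Eˣ) : E) = 1 := by
    let N := Units.map (Algebra.norm (Subring.center E) (S := E))
    have := map_commutatorElement N a b
    rw [commutatorElement_eq_one_iff_commute.mpr (Commute.all (N a) (N b))] at this
    exact congrArg Units.val this
  have hz : (⟨_, h⟩ : Subring.center E) ^ Module.finrank (Subring.center E) E = 1 := by
    rw [← Algebra.norm_algebraMap (S := E)]
    exact (map_pow _ _ _).trans (by rw [hN, one_pow])
  refine isOfFinOrder_iff_pow_eq_one.mpr ⟨m * Module.finrank (Subring.center E) E,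
    Nat.mul_pos hm Module.finrank_pos, Units.ext ?_⟩
  rw [Units.val_pow_eq_pow_val, pow_mul]
  exact congrArg Subtype.val hz

theorem exists_mul_eq_pow_mul_mul {c : Eˣ} (hc : (c : E) ∉ Subring.center E)
    (hfin : IsOfFinOrder c) :
    ∃ e : E, e ≠ 0 ∧ ∃ i, 0 < i ∧ i < orderOf c ∧ (c : E) * e = (c : E) ^ i * e * c := by
  let R := Algebra.adjoin ℤ {(c : E)}
  let γ : R := ⟨c, Algebra.self_mem_adjoin_singleton ℤ _⟩
  have hγ : IsPrimitiveRoot γ (orderOf c) := by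
    have hord : orderOf γ = orderOf c :=
      (orderOf_injective R.val.toMonoidHom Subtype.val_injective γ).symm.trans orderOf_units
    exact hord ▸ IsPrimitiveRoot.orderOf γ
  have hRc : ∀ r : R, (r : E) * c = c * r := fun r =>
    (Algebra.commute_of_mem_adjoin_singleton_of_commute r.2 (Commute.refl _)).symm.eq
  let φ : Module.End R E :=
    { toFun := fun e => c * e * c⁻¹
      map_add' := fun e f => by simp only [mul_add, add_mul]
      map_smul' := fun r e => by
        simp only [Subalgebra.smul_def, smul_eq_mul, RingHom.id_apply, ← mul_assoc, hRc] }
  have hφpow : ∀ k e, (φ ^ k) e = ↑(c ^ k) * e * ↑(c ^ k)⁻¹ := by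
    intro k
    induction k with
    | zero => simp
    | succ k ih =>
      intro e
      rw [pow_succ', Module.End.mul_apply, ih]
      simp [φ, pow_succ', mul_assoc]
  have hφn : φ ^ orderOf c = 1 := LinearMap.ext fun e => by
    rw [hφpow, pow_orderOf_eq_one]; simp
  have hφ1 : φ ≠ 1 := by
    intro h
    refine hc (Subring.mem_center_iff.mpr fun e => ?_)
    have := LinearMap.congr_fun h e
    simp only [φ, LinearMap.coe_mk, AddHom.coe_mk, Module.End.one_apply,
      Units.val_inv_eq_inv_val] at this
    exact ((mul_inv_eq_iff_eq_mul₀ c.ne_zero).mp this).symm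
  obtain ⟨i, hi0, hin, hφi⟩ :=
    φ.exists_hasEigenvalue_pow_of_pow_eq_one hγ hfin.orderOf_pos hφn hφ1
  obtain ⟨e, he⟩ := hφi.exists_hasEigenvector
  refine ⟨e, he.2, i, hi0, hin, ?_⟩
  have := he.apply_eq_smul
  simp [φ, Subalgebra.smul_def, γ] at this
  exact (mul_inv_eq_iff_eq_mul₀ c.ne_zero).mp this

theorem exists_inv_mul_mul_eq_pow_ne {c : Eˣ} (hc : (c : E) ∉ Subring.center E)
    (hfin : IsOfFinOrder c) : ∃ (x : Eˣ) (j : ℕ), x⁻¹ * c * x = c ^ j ∧ c ^ j ≠ c := by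
  obtain ⟨e, he, i, hi0, hin, hce⟩ := exists_mul_eq_pow_mul_mul hc hfin
  set n := orderOf c
  let u := Units.mk0 e he
  have hcu : c * u = c ^ i * u * c := Units.ext (by simpa [u] using hce)
  have key : c ^ (n + 1 - i) * u = u * c := by
    rw [show n + 1 - i = n - i + 1 by omega, pow_succ, mul_assoc, hcu, ← mul_assoc,
      ← mul_assoc, ← pow_add, Nat.sub_add_cancel hin.le, pow_orderOf_eq_one, one_mul]
  refine ⟨u⁻¹, n + 1 - i, by rw [inv_inv, ← key]; group, fun h => ?_⟩
  rw [show n + 1 - i = n - i + 1 by omega, pow_succ, mul_eq_right] at h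
  have := Nat.le_of_dvd (by omega) (orderOf_dvd_of_pow_eq_one h)
  omega

theorem exists_add_pow_eq_add_pow_of_inv_mul_mul_eq_pow
    (htors : ∀ a b : Eˣ, IsOfFinOrder ⁅a, b⁆) {c x : Eˣ} {j : ℕ} (hx : x⁻¹ * c * x = c ^ j)
    (hc : (c : E) ∉ Subring.center E) {t : E} (ht : t ∈ Subring.center E) :
    ∃ M, 0 < M ∧ ((c : E) ^ j + t) ^ M = ((c : E) + t) ^ M := by
  have hct : (c : E) + t ≠ 0 := fun h => hc (eq_neg_of_add_eq_zero_left h ▸ neg_mem ht)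
  have htc : ∀ g : E, Commute g t := fun g => Subring.mem_center_iff.mp ht g
  have hconj : (x : E)⁻¹ * ((c : E) + t) * x = (c : E) ^ j + t := by
    rw [mul_add, add_mul, (htc _).eq, inv_mul_cancel_right₀ x.ne_zero, ← Units.val_inv_eq_inv_val,
      ← Units.val_mul, ← Units.val_mul, hx, Units.val_pow_eq_pow_val]
  obtain ⟨M, hM, hMt⟩ := isOfFinOrder_iff_pow_eq_one.mp (htors x⁻¹ (Units.mk0 _ hct))
  have hcomm : Commute ((c : E) ^ j + t) ((c : E) + t)⁻¹ :=
    ((((Commute.refl (c : E)).pow_left j).add_right (htc _)).add_left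
      ((htc _).symm.add_right (Commute.refl t))).inv_right₀
  refine ⟨M, hM, ?_⟩
  have := congrArg Units.val hMt
  simp only [commutatorElement_def, inv_inv, Units.val_pow_eq_pow_val, Units.val_mul,
    Units.val_mk0, Units.val_inv_eq_inv_val] at this
  rwa [hconj, hcomm.mul_pow, inv_pow, Units.val_one, mul_inv_eq_one₀ (pow_ne_zero _ hct)] at this

theorem pow_eq_self_of_forall_exists_add_natCast_pow_eq [CharZero E] {a : E}
    (ha : IsIntegral ℚ a) {j : ℕ} (h : ∀ t : ℕ, ∃ M, 0 < M ∧ (a ^ j + t) ^ M = (a + t) ^ M) :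
    a ^ j = a := by
  let A := Algebra.adjoin ℚ {a}
  have hfin : Module.Finite ℚ A := Algebra.finite_adjoin_simple_of_isIntegral ha
  let _ : Field A := (isField_of_isIntegral_of_isField' (R := ℚ) (Field.toIsField ℚ)).toField
  -- the field structure brings its own `ℚ`-module structure, equal to that of `A` by uniqueness
  have : NumberField A :=
    { to_charZero := inferInstance
      to_finiteDimensional := by convert hfin; exact Subsingleton.elim _ _ }
  let a' : A := ⟨a, Algebra.self_mem_adjoin_singleton ℚ a⟩
  have := NumberField.eq_of_forall_exists_add_natCast_pow_eq (a := a') (b := a' ^ j) fun t => by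
    obtain ⟨M, hM, hMt⟩ := h t
    exact ⟨M, hM, Subtype.ext (by simpa using hMt)⟩
  exact (congrArg Subtype.val this).symm

theorem isIntegral_of_mem_center_of_add_pow_eq {F : Type*} [Field F] [Algebra F E] {a θ : E}
    (ha : IsIntegral F a) (hθ : θ ∈ Subring.center E) {j M : ℕ} (hM : 0 < M) (hj : a ^ j ≠ a)
    (h : (a ^ j + θ) ^ M = (a + θ) ^ M) : IsIntegral F θ := by
  have hcomm : ∀ x ∈ ({a, θ} : Set E), ∀ y ∈ ({a, θ} : Set E), x * y = y * x := by
    have := Subring.mem_center_iff.mp hθ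
    rintro x (rfl | rfl) y (rfl | rfl) <;> simp [this]
  have := Algebra.isMulCommutative_adjoin F hcomm
  let A := Algebra.adjoin F {a, θ}
  let a' : A := ⟨a, Algebra.subset_adjoin (by simp)⟩
  let θ' : A := ⟨θ, Algebra.subset_adjoin (by simp)⟩
  have ha' : IsIntegral F a' := (isIntegral_algHom_iff A.val Subtype.val_injective).mp ha
  have key : IsIntegral F θ' := isIntegral_of_add_pow_eq_add_pow ha' (ha'.pow j)
    (fun h' => hj (congrArg Subtype.val h').symm) hM (Subtype.ext (by simpa using h))
  exact key.map A.val

theorem isIntegral_of_forall_mem_center_isIntegral {F : Type*} [CommRing F] [Algebra F E]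
    [Module.Finite (Subring.center E) E] (h : ∀ z ∈ Subring.center E, IsIntegral F z) (y : E) :
    IsIntegral F y := by
  let _ : Algebra F (Subring.center E) := ((algebraMap F E).codRestrict _ fun r =>
    Subring.mem_center_iff.mpr fun g => (Algebra.commutes r g).symm).toAlgebra
  have : IsScalarTower F (Subring.center E) E := .of_algebraMap_eq fun _ => rfl
  have : Algebra.IsIntegral F (Subring.center E) := ⟨fun z =>
    (isIntegral_algHom_iff (IsScalarTower.toAlgHom F _ E) Subtype.val_injective).mp (h z z.2)⟩
  exact isIntegral_trans y (Algebra.IsIntegral.isIntegral (R := Subring.center E) y)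

theorem IsIntegral.isOfFinOrder {F : Type*} [Field F] [Finite F] [Algebra F E] {x : E}
    (hx : IsIntegral F x) (h0 : x ≠ 0) : IsOfFinOrder x := by
  have : Module.Finite F (Algebra.adjoin F {x}) := Algebra.finite_adjoin_simple_of_isIntegral hx
  have : Finite (Algebra.adjoin F {x}) := Module.finite_of_finite F
  have hunit : IsUnit (⟨x, Algebra.self_mem_adjoin_singleton F x⟩ : Algebra.adjoin F {x}) :=
    .of_mul_eq_one ⟨x⁻¹, hx.inv_mem_adjoin⟩ (Subtype.ext (mul_inv_cancel₀ h0))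
  exact (Algebra.adjoin F {x}).val.toMonoidHom.isOfFinOrder (isOfFinOrder_iff_isUnit.mpr hunit)

theorem commute_of_finite_closure_pair (F : Type*) [Field F] [Finite F] [Algebra F E] {a b : E}
    (h : (Submonoid.closure {a, b} : Set E).Finite) : Commute a b := by
  let A := Algebra.adjoin F {a, b}
  have : Module.Finite F A := ⟨(Submodule.fg_top (Subalgebra.toSubmodule A)).mpr (by
    rw [Algebra.adjoin_eq_span]; exact Submodule.fg_span h)⟩
  have : Finite A := Module.finite_of_finite F
  exact congrArg Subtype.val <| (Finite.isDomain_to_isField A).mul_comm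
    ⟨a, Algebra.subset_adjoin (by simp)⟩ ⟨b, Algebra.subset_adjoin (by simp)⟩

theorem commute_of_forall_isOfFinOrder_commutator [Module.Finite (Subring.center E) E]
    (htors : ∀ a b : Eˣ, IsOfFinOrder ⁅a, b⁆) (a b : E) : Commute a b := by
  by_contra hab
  obtain ⟨c, hc, hcfin⟩ : ∃ c : Eˣ, (c : E) ∉ Subring.center E ∧ IsOfFinOrder c := by
    have ha : a ≠ 0 := by rintro rfl; exact hab (Commute.zero_left b)
    have hac : ((Units.mk0 a ha : Eˣ) : E) ∉ Subring.center E := fun h =>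
      hab (Subring.mem_center_iff.mp h b).symm
    obtain ⟨v, hv⟩ := not_forall.mp (mt mem_center_of_forall_commutator_mem_center hac)
    exact ⟨_, hv, htors _ v⟩
  obtain ⟨x, j, hx, hj⟩ := exists_inv_mul_mul_eq_pow_ne hc hcfin
  have hcfin' : IsOfFinOrder (c : E) := (Units.coeHom E).isOfFinOrder hcfin
  have hrel := fun t (ht : t ∈ Subring.center E) =>
    exists_add_pow_eq_add_pow_of_inv_mul_mul_eq_pow htors hx hc ht
  apply hj
  obtain ⟨p, hp⟩ := CharP.exists E
  rcases CharP.char_is_prime_or_zero E p with hprime | rfl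
  · have : Fact p.Prime := ⟨hprime⟩
    let _ : Algebra (ZMod p) E := ZMod.algebra E p
    have hcent : ∀ θ ∈ Subring.center E, IsIntegral (ZMod p) θ := fun θ hθ => by
      obtain ⟨M, hM, hMθ⟩ := hrel θ hθ
      exact isIntegral_of_mem_center_of_add_pow_eq hcfin'.isIntegral hθ hM
        (by exact_mod_cast hj) hMθ
    have hxfin : IsOfFinOrder x := (Function.Injective.isOfFinOrder_iff
      (f := Units.coeHom E) fun _ _ => Units.ext).mp
      ((isIntegral_of_forall_mem_center_isIntegral hcent x).isOfFinOrder x.ne_zero)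
    have hfin := (finite_closure_pair_of_inv_mul_mul_eq_pow hcfin hxfin hx).image (Units.coeHom E)
    rw [← Submonoid.coe_map, MonoidHom.map_mclosure, Set.image_pair] at hfin
    have hcx : c * x = x * c := Units.ext (commute_of_finite_closure_pair (ZMod p) hfin).eq
    rw [← hx, mul_assoc, hcx, inv_mul_cancel_left]
  · have : CharZero E := CharP.charP_to_charZero E
    exact Units.ext (by
      simpa using pow_eq_self_of_forall_exists_add_natCast_pow_eq hcfin'.isIntegral
        fun t => hrel t (natCast_mem _ t))

theorem commute_of_forall_commutator_pow_mem_center [Module.Finite (Subring.center E) E]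
    (hrad : ∀ a b : Eˣ, ∃ m, 0 < m ∧ ((⁅a, b⁆ : Eˣ) : E) ^ m ∈ Subring.center E) (a b : E) :
    Commute a b :=
  commute_of_forall_isOfFinOrder_commutator (fun a b =>
    let ⟨_, hm, h⟩ := hrad a b
    isOfFinOrder_commutator_of_pow_mem_center a b hm h) a b

end DivisionRing

/-- If every multiplicative commutator of a weakly locally finite division ring `D` is
radical over the center `F` (some positive power lies in `F`), then `D` is
commutative. -/
theorem commutative_of_commutators_radical (D : Type*) [DivisionRing D]
    (h : IsWeaklyLocallyFinite D)
    (hrad : ∀ a b : Dˣ, ∃ m : ℕ, 0 < m ∧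
      (((a * b * a⁻¹ * b⁻¹ : Dˣ) : D)) ^ m ∈ Subring.center D) :
    ∀ a b : D, a * b = b * a := by
  classical
  intro a b
  let K := Subfield.closure ((({a, b} : Finset D)) : Set D)
  have : Module.Finite (Subring.center K) K := h {a, b}
  have hradK : ∀ u v : Kˣ, ∃ m, 0 < m ∧ ((⁅u, v⁆ : Kˣ) : K) ^ m ∈ Subring.center K := by
    intro u v
    obtain ⟨m, hm, hmem⟩ := hrad (Units.map K.subtype u) (Units.map K.subtype v)
    refine ⟨m, hm, Subring.mem_center_of_map_mem_center (f := K.subtype) Subtype.val_injective ?_⟩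
    simpa [commutatorElement_def] using hmem
  exact congrArg Subtype.val <| commute_of_forall_commutator_pow_mem_center hradK
    ⟨a, Subfield.subset_closure (by simp)⟩ ⟨b, Subfield.subset_closure (by simp)⟩
end
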